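/- arXiv:1310.7445 — 4 statements merged into one kernel-verified Lean document; each statement's English description precedes it below -/
import Mathlib

section
/- Let G be a finite group. Then the nilpotent residual of G centralizes the hypercenter of G, i.e., G^𝔑 ≤ C_G(Z_∞(G)). -/
open Subgroup Pointwise

/-- `H` is a normal subgroup of `K` (both viewed as subgroups of the ambient group `G`). -/
def NormalIn {G : Type*} [Group G] (H K : Subgroup G) : Prop :=
  H ≤ K ∧ ∀ k ∈ K, ∀ h ∈ H, k * h * k⁻¹ ∈ H

/-- `H` is subnormal in `K`: there is a chain `H = c 0 ⊴ c 1 ⊴ ... ⊴ c n = K`. -/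
def SubnormalIn {G : Type*} [Group G] (H K : Subgroup G) : Prop :=
  ∃ (n : ℕ) (c : ℕ → Subgroup G), c 0 = H ∧ c n = K ∧ ∀ i < n, NormalIn (c i) (c (i + 1))

/-- The hypercenter: the limit of the upper central series. -/
def hypercenter (G : Type*) [Group G] : Subgroup G := ⨆ n, _root_.upperCentralSeries G n

/-- The nilpotent residual: the intersection of all normal subgroups with nilpotent quotient. -/
def nilpotentResidual (G : Type*) [Group G] : Subgroup G :=
  ⨅ N ∈ {N : Subgroup G |
    ∃ h : N.Normal, @Group.IsNilpotent (G ⧸ N) (@QuotientGroup.Quotient.group G _ N h)}, N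

/-- The Fitting subgroup: the join of all normal nilpotent subgroups. -/
def fitting (G : Type*) [Group G] : Subgroup G :=
  ⨆ N ∈ {N : Subgroup G | N.Normal ∧ Group.IsNilpotent N}, N

/-- `N` is a minimal normal subgroup. -/
def IsMinimalNormal {G : Type*} [Group G] (N : Subgroup G) : Prop :=
  N.Normal ∧ N ≠ ⊥ ∧ ∀ K : Subgroup G, K.Normal → K ≤ N → K = ⊥ ∨ K = N

/-- The socle: the join of all minimal normal subgroups. -/
def socle (G : Type*) [Group G] : Subgroup G :=
  ⨆ N ∈ {N : Subgroup G | IsMinimalNormal N}, N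

/-- A group is supersolvable if it has a chain of normal subgroups with cyclic factors. -/
def IsSupersolvable (G : Type*) [Group G] : Prop :=
  ∃ (n : ℕ) (c : ℕ → Subgroup G), c 0 = ⊥ ∧ c n = ⊤ ∧ (∀ i, (c i).Normal) ∧
    ∀ i < n, c i ≤ c (i + 1) ∧ ∃ g : G, c (i + 1) = c i ⊔ Subgroup.zpowers g

/-- A subgroup `H` is pronormal if `H` and each conjugate `H^g` are conjugate in their join. -/
def Pronormal {G : Type*} [Group G] (H : Subgroup G) : Prop :=
  ∀ g : G, ∃ x ∈ H ⊔ H.map (MulAut.conj g).toMonoidHom,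
    H.map (MulAut.conj g).toMonoidHom = H.map (MulAut.conj x).toMonoidHom

/-- A subgroup `H` is abnormal if `g ∈ ⟨H, H^g⟩` for all `g`. -/
def Abnormal {G : Type*} [Group G] (H : Subgroup G) : Prop :=
  ∀ g : G, g ∈ H ⊔ H.map (MulAut.conj g).toMonoidHom

/-- `Δ(G)`: the intersection of all abnormal maximal subgroups. -/
def abnormalDelta (G : Type*) [Group G] : Subgroup G :=
  ⨅ M ∈ {M : Subgroup G | IsCoatom M ∧ Abnormal M}, M

/-- The generalized Fitting subgroup `F̃(G)`: the preimage of `Soc(G/Φ(G))` in `G`. -/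
def genFitting (G : Type*) [Group G] : Subgroup G :=
  (socle (G ⧸ frattini G)).comap (QuotientGroup.mk' (frattini G))

/-- A group is `p`-decomposable if every `p`-element commutes with every `p'`-element. -/
def IsPDecomposable (p : ℕ) (K : Type*) [Group K] : Prop :=
  ∀ a b : K, (∃ n, orderOf a = p ^ n) → Nat.Coprime (orderOf b) p → Commute a b

/-! `G^𝔑` lies in every term `γₙ` of the lower central series, and every element of the
hypercenter lies in some `Zₙ`, so it suffices that `⁅γₙ, Zₙ⁆ = 1`. This follows by induction
on `n`, for all groups at once: applied to `G ⧸ Z(G)` the induction hypothesis gives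
`⁅γₙ, Zₙ₊₁⁆ ≤ Z(G)`, and then the three subgroups lemma kills `⁅⁅γₙ, G⁆, Zₙ₊₁⁆`. -/

namespace Subgroup

theorem map_top_lowerCentralSeries_of_surjective {G H : Type*} [Group G] [Group H] {f : G →* H}
    (hf : Function.Surjective f) (n : ℕ) :
    (lowerCentralSeries (⊤ : Subgroup G) n).map f = lowerCentralSeries (⊤ : Subgroup H) n := by
  rw [map_lowerCentralSeries, map_top_of_surjective f hf]

theorem commutator_lowerCentralSeries_upperCentralSeries_le_center {G : Type*} [Group G] (n : ℕ)
    (h : ⁅lowerCentralSeries (⊤ : Subgroup (G ⧸ center G)) n,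
      upperCentralSeries (G ⧸ center G) n⁆ = ⊥) :
    ⁅lowerCentralSeries (⊤ : Subgroup G) n, upperCentralSeries G (n + 1)⁆ ≤ center G := by
  have hmk := QuotientGroup.mk'_surjective (center G)
  rw [← QuotientGroup.ker_mk' (center G), ← map_eq_bot_iff, eq_bot_iff, map_commutator,
    map_top_lowerCentralSeries_of_surjective hmk, ← h]
  refine commutator_mono le_rfl ?_
  rw [← comap_upperCentralSeries_quotient_center]
  exact map_comap_le _ _

theorem commutator_lowerCentralSeries_upperCentralSeries_eq_bot (G : Type*) [Group G] (n : ℕ) :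
    ⁅lowerCentralSeries (⊤ : Subgroup G) n, upperCentralSeries G n⁆ = ⊥ := by
  induction n generalizing G with
  | zero => simp
  | succ n ih =>
    have hZ : ⁅lowerCentralSeries (⊤ : Subgroup G) n, upperCentralSeries G (n + 1)⁆ ≤ center G :=
      commutator_lowerCentralSeries_upperCentralSeries_le_center n (ih _)
    rw [lowerCentralSeries_succ]
    refine commutator_commutator_eq_bot_of_rotate ?_ ?_
    · rw [eq_bot_iff, ← ih G, commutator_comm (lowerCentralSeries ⊤ n)]
      refine commutator_mono ?_ le_rfl
      rw [commutator_comm]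
      exact commutator_upperCentralSeries_top_le G n
    · rw [commutator_comm (upperCentralSeries G (n + 1)), commutator_eq_bot_iff_le_centralizer]
      exact hZ.trans fun z hz g _ => mem_center_iff.mp hz g

end Subgroup

theorem nilpotentResidual_le_lowerCentralSeries (G : Type*) [Group G] (n : ℕ) :
    nilpotentResidual G ≤ (⊤ : Subgroup G).lowerCentralSeries n := by
  have hnil : Group.IsNilpotent (G ⧸ (⊤ : Subgroup G).lowerCentralSeries n) := by
    refine Subgroup.nilpotent_iff_lowerCentralSeries.mpr ⟨n, ?_⟩
    rw [← map_top_lowerCentralSeries_of_surjective (QuotientGroup.mk'_surjective _),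
      Subgroup.map_eq_bot_iff, QuotientGroup.ker_mk']
  exact iInf₂_le _ ⟨inferInstance, hnil⟩

theorem nilpotentResidual_le_centralizer_hypercenter_general {G : Type*} [Group G] :
    nilpotentResidual G ≤ Subgroup.centralizer (hypercenter G : Set G) := by
  rw [le_centralizer_iff, hypercenter, iSup_le_iff]
  intro n
  rw [← commutator_eq_bot_iff_le_centralizer, commutator_comm, eq_bot_iff,
    ← commutator_lowerCentralSeries_upperCentralSeries_eq_bot G n]
  exact commutator_mono (nilpotentResidual_le_lowerCentralSeries G n) le_rfl

theorem nilpotentResidual_le_centralizer_hypercenter {G : Type*} [Group G] [Finite G] :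
    nilpotentResidual G ≤ Subgroup.centralizer (hypercenter G : Set G) :=
  nilpotentResidual_le_centralizer_hypercenter_general
end

section
/- Let G be a finite group and N a normal subgroup of G such that for every prime-power element x of G, the cyclic subgroup ⟨x⟩ is subnormal in ⟨x⟩·N. Then every Sylow subgroup P of G is subnormal in P·N. -/
open Subgroup Pointwise

/-! Put `H = P ⊔ N`. The quotient `H / N ≅ P / (P ⊓ N)` is a `p`-group, hence nilpotent, so every
subgroup of `H` containing `N` is subnormal in `H`; together with the hypothesis, every cyclic
subgroup `⟨x⟩` of `P` is subnormal in `H`. A subnormal `p`-subgroup lies in the `p`-core `O_p(H)`,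
because the `p`-core of a normal subgroup is normal in the bigger group. Hence `P ≤ O_p(H)`, and
since `P` is a Sylow subgroup, `P = O_p(H)` is normal in `H`. -/

open Relation

section NormalIn

variable {G : Type*} [Group G] {H K : Subgroup G}

theorem normalIn_iff : NormalIn H K ↔ H ≤ K ∧ K ≤ normalizer (H : Set G) :=
  and_congr_right' le_normalizer_iff.symm

theorem normalIn_refl (H : Subgroup G) : NormalIn H H :=
  normalIn_iff.2 ⟨le_rfl, le_normalizer⟩

theorem NormalIn.map {G' : Type*} [Group G'] (f : G →* G') (h : NormalIn H K) :
    NormalIn (H.map f) (K.map f) := by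
  rw [normalIn_iff] at h ⊢
  exact ⟨Subgroup.map_mono h.1, (Subgroup.map_mono h.2).trans (le_normalizer_map f)⟩

theorem NormalIn.comap {G' : Type*} [Group G'] (f : G' →* G) (h : NormalIn H K) :
    NormalIn (H.comap f) (K.comap f) := by
  rw [normalIn_iff] at h ⊢
  exact ⟨Subgroup.comap_mono h.1, (Subgroup.comap_mono h.2).trans (le_normalizer_comap f)⟩

theorem NormalIn.subnormalIn (h : NormalIn H K) : SubnormalIn H K :=
  ⟨1, fun i => if i = 0 then H else K, rfl, rfl, fun i hi => by
    obtain rfl : i = 0 := by omega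
    exact h⟩

theorem SubnormalIn.reflTransGen (h : SubnormalIn H K) : ReflTransGen NormalIn H K := by
  obtain ⟨n, c, rfl, rfl, hc⟩ := h
  suffices ∀ i ≤ n, ReflTransGen NormalIn (c 0) (c i) from this n le_rfl
  intro i hi
  induction i with
  | zero => exact .refl
  | succ i ih => exact (ih (by omega)).tail (hc i (by omega))

end NormalIn

section Nilpotent

variable {G : Type*} [Group G]

theorem upperCentralSeries_succ_le_normalizer {n : ℕ} {H : Subgroup G}
    (hn : Subgroup.upperCentralSeries G n ≤ H) :
    Subgroup.upperCentralSeries G (n + 1) ≤ normalizer (H : Set G) := by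
  refine le_normalizer_iff.2 fun z hz h hh => ?_
  have hcomm : z * h * z⁻¹ * h⁻¹ ∈ H := hn (Subgroup.mem_upperCentralSeries_succ_iff.1 hz h)
  simpa using mul_mem hcomm hh

theorem reflTransGen_normalIn_top_of_isNilpotent [hG : Group.IsNilpotent G] (A : Subgroup G) :
    ReflTransGen NormalIn A ⊤ := by
  obtain ⟨n, hn⟩ := hG.nilpotent'
  have hstep (i : ℕ) :
      NormalIn (A ⊔ Subgroup.upperCentralSeries G i) (A ⊔ Subgroup.upperCentralSeries G (i + 1)) :=
    normalIn_iff.2 ⟨sup_le_sup_left (Subgroup.upperCentralSeries_mono G i.le_succ) A,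
      sup_le (le_normalizer.trans normalizer_le_normalizer_sup_normal)
        (upperCentralSeries_succ_le_normalizer le_sup_right)⟩
  have hchain (i : ℕ) : ReflTransGen NormalIn A (A ⊔ Subgroup.upperCentralSeries G i) := by
    induction i with
    | zero => simpa using ReflTransGen.refl
    | succ i ih => exact ih.tail (hstep i)
  simpa [hn] using hchain n

theorem reflTransGen_normalIn_of_isNilpotent_quotient {N A K : Subgroup G}
    [(N.subgroupOf K).Normal] [Group.IsNilpotent (K ⧸ N.subgroupOf K)]
    (hNA : N ≤ A) (hAK : A ≤ K) : ReflTransGen NormalIn A K := by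
  let π := QuotientGroup.mk' (N.subgroupOf K)
  have h : ReflTransGen NormalIn (((A.subgroupOf K).map π).comap π |>.map K.subtype)
      ((⊤ : Subgroup (K ⧸ N.subgroupOf K)).comap π |>.map K.subtype) :=
    (reflTransGen_normalIn_top_of_isNilpotent _).lift (fun B => (B.comap π).map K.subtype)
      fun _ _ hB => (hB.comap π).map K.subtype
  simpa [π, comap_map_eq, map_subgroupOf_eq_of_le hAK, subgroupOf_mono K hNA,
    ← MonoidHom.range_eq_map] using h

end Nilpotent

section PCore

variable {G : Type*} [Group G] (p : ℕ) {M L W : Subgroup G}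

-- the `p`-core `O_p(M)`
def pCoreIn (M : Subgroup G) : Subgroup G :=
  sSup {W | NormalIn W M ∧ IsPGroup p W}

variable {p}

theorem le_pCoreIn (hW : NormalIn W M) (hp : IsPGroup p W) : W ≤ pCoreIn p M :=
  le_sSup ⟨hW, hp⟩

theorem pCoreIn_mem [Finite G] (M : Subgroup G) :
    pCoreIn p M ∈ {W | NormalIn W M ∧ IsPGroup p W} := by
  have hsup : SupClosed {W | NormalIn W M ∧ IsPGroup p W} := by
    rintro W₁ ⟨hW₁, hp₁⟩ W₂ ⟨hW₂, hp₂⟩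
    rw [normalIn_iff] at hW₁ hW₂
    exact ⟨normalIn_iff.2 ⟨sup_le hW₁.1 hW₂.1,
        (le_inf hW₁.2 hW₂.2).trans (normalizer_inf_normalizer_le_normalizer_sup _ _)⟩,
      hp₁.to_sup_of_normal_right' hp₂ (hW₁.1.trans hW₂.2)⟩
  have hbot : NormalIn ⊥ M := normalIn_iff.2 ⟨bot_le, le_normalizer_of_normal⟩
  exact hsup.sSup_mem (Set.toFinite _) ⟨hbot, IsPGroup.of_bot⟩ le_rfl

theorem normalIn_pCoreIn [Finite G] (M : Subgroup G) : NormalIn (pCoreIn p M) M :=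
  (pCoreIn_mem M).1

theorem isPGroup_pCoreIn [Finite G] (M : Subgroup G) : IsPGroup p (pCoreIn p M) :=
  (pCoreIn_mem M).2

theorem normalIn_pCoreIn_of_normalIn [Finite G] (hML : NormalIn M L) :
    NormalIn (pCoreIn p M) L := by
  have hOM := normalIn_pCoreIn (p := p) M
  refine ⟨hOM.1.trans hML.1, fun l hl x hx => ?_⟩
  let c := (MulAut.conj l).toMonoidHom
  have hMc : M.map c = M := mem_normalizer_iff_map_conj_eq.1 ((normalIn_iff.1 hML).2 hl)
  -- conjugation by `l` fixes `M`, so it maps `O_p(M)` to a normal `p`-subgroup of `M`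
  have hc : NormalIn ((pCoreIn p M).map c) M := by
    simpa only [hMc] using hOM.map c
  exact le_pCoreIn hc ((isPGroup_pCoreIn M).map c) ⟨x, hx, rfl⟩

theorem le_pCoreIn_of_reflTransGen [Finite G] {A K : Subgroup G}
    (hAK : ReflTransGen NormalIn A K) (hA : IsPGroup p A) : A ≤ pCoreIn p K := by
  induction hAK with
  | refl => exact le_pCoreIn (normalIn_refl A) hA
  | tail _ hML ih =>
    exact ih.trans (le_pCoreIn (normalIn_pCoreIn_of_normalIn hML) (isPGroup_pCoreIn _))

end PCore

theorem sylow_subnormal_of_cyclic_primary_subnormal {G : Type*} [Group G] [Finite G]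
    (N : Subgroup G) (hN : N.Normal)
    (h : ∀ x : G, (∃ q n : ℕ, Nat.Prime q ∧ orderOf x = q ^ n) →
      SubnormalIn (Subgroup.zpowers x) (Subgroup.zpowers x ⊔ N)) :
    ∀ (p : ℕ) [Fact p.Prime] (P : Sylow p G),
      SubnormalIn (P : Subgroup G) ((P : Subgroup G) ⊔ N) := by
  intro p _ P
  set H := (P : Subgroup G) ⊔ N
  have : Group.IsNilpotent (H ⧸ N.subgroupOf H) :=
    (P.isPGroup'.to_quotient (N.subgroupOf P)).of_equiv
      (QuotientGroup.quotientInfEquivProdNormalQuotient _ N) |>.isNilpotent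
  have hsubnormal (x : G) (hx : x ∈ P) : ReflTransGen NormalIn (zpowers x) H := by
    obtain ⟨k, hk⟩ := IsPGroup.iff_orderOf.1 P.isPGroup' ⟨x, hx⟩
    rw [Subgroup.orderOf_mk] at hk
    refine (h x ⟨p, k, Fact.out, hk⟩).reflTransGen.trans ?_
    exact reflTransGen_normalIn_of_isNilpotent_quotient le_sup_right
      (sup_le_sup_right (zpowers_le.2 hx) N)
  have hPO : (P : Subgroup G) ≤ pCoreIn p H := fun x hx =>
    le_pCoreIn_of_reflTransGen (hsubnormal x hx) (P.isPGroup'.to_le (zpowers_le.2 hx))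
      (mem_zpowers x)
  have hOP : pCoreIn p H = P := P.3 (isPGroup_pCoreIn H) hPO
  exact (hOP ▸ normalIn_pCoreIn H).subnormalIn
end

section
/- Let G be a finite group that is the product G = A·B of two subnormal supersolvable subgroups A and B. If the derived subgroup G' of G is nilpotent, then G is supersolvable. -/
open Subgroup Pointwise

open scoped commutatorElement

/-!
Induction on `|G|`. Let `N` be a minimal normal subgroup. It is abelian and centralized by `G'`:
otherwise `N = ⁅N, G'⁆`, which is impossible inside the nilpotent group `G'`. So `G` acts on `N`
through the abelian group `G / C_G(N)`, and if `a v a⁻¹ = v ^ l` for some `v ≠ 1` in `N`, the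
elements of `N` on which `a` acts as `n ↦ n ^ l` form a nontrivial normal subgroup, hence all
of `N`.
For `a` in a subnormal supersolvable factor `A` such a `v` exists: if `N ∩ A ≠ 1`, take a generator
of a cyclic normal subgroup of `A` inside `N ∩ A`; if `N ∩ A = 1`, then `⁅N, A⁆` is normal in `G`
and repeated commutation with `A` eventually lands in `A`, which forces `⁅N, A⁆ = 1`.
As `G = AB`, every element of `G` acts on `N` as a power map, so every subgroup of `N` is normal
and `N` is cyclic; `G / N` inherits the hypotheses and is supersolvable by induction.
-/

section
variable {G : Type*} [Group G]

theorem Subgroup.eq_bot_of_le_commutator {N K : Subgroup G} [Group.IsNilpotent K] (hNK : N ≤ K)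
    (h : N ≤ ⁅N, K⁆) : N = ⊥ := by
  obtain ⟨n, hn⟩ := (isNilpotent_iff_lowerCentralSeries K).mp ‹_›
  have hle : ∀ k, N ≤ K.lowerCentralSeries k := by
    intro k
    induction k with
    | zero => exact hNK
    | succ k ih => exact h.trans (commutator_mono ih le_rfl)
  exact le_bot_iff.mp (hn ▸ hle n)

theorem Subgroup.commute_of_commutator_eq_bot {H K : Subgroup G} (hHK : ⁅H, K⁆ = ⊥) {x y : G}
    (hx : x ∈ H) (hy : y ∈ K) : Commute x y :=
  commutatorElement_eq_one_iff_commute.mp (mem_bot.mp (hHK ▸ commutator_mem_commutator hx hy))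

theorem NormalIn.commutator_le {H K A : Subgroup G} (hHK : NormalIn H K) (hAH : A ≤ H) :
    ⁅K, A⁆ ≤ H :=
  Subgroup.commutator_le.mpr fun k hk a ha => mul_mem (hHK.2 k hk a (hAH ha)) (inv_mem (hAH ha))

theorem SubnormalIn.exists_iterate_commutator_le {A : Subgroup G} (hA : SubnormalIn A ⊤) :
    ∃ m, (fun H => ⁅H, A⁆)^[m] ⊤ ≤ A := by
  obtain ⟨m, c, hc0, hcm, hstep⟩ := hA
  have hmono : Monotone (fun H : Subgroup G => ⁅H, A⁆) := fun _ _ h => commutator_mono h le_rfl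
  have key : ∀ k ≤ m, A ≤ c k ∧ (fun H => ⁅H, A⁆)^[k] (c k) ≤ A := by
    intro k
    induction k with
    | zero => exact fun _ => ⟨hc0.ge, hc0.le⟩
    | succ k ih =>
      intro hk
      obtain ⟨hAc, hiter⟩ := ih (by omega)
      refine ⟨hAc.trans (hstep k hk).1, ?_⟩
      rw [Function.iterate_succ_apply]
      exact (hmono.iterate k ((hstep k hk).commutator_le hAc)).trans hiter
  exact ⟨m, hcm ▸ (key m le_rfl).2⟩

theorem SubnormalIn.map {Q : Type*} [Group Q] (f : G →* Q) (hf : Function.Surjective f)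
    {A : Subgroup G} (hA : SubnormalIn A ⊤) : SubnormalIn (A.map f) ⊤ := by
  obtain ⟨n, c, hc0, hcn, hstep⟩ := hA
  refine ⟨n, fun i => (c i).map f, by simp only [hc0],
    by simp only [hcn, map_top_of_surjective f hf], fun i hi => ⟨map_mono (hstep i hi).1, ?_⟩⟩
  rintro _ ⟨k, hk, rfl⟩ _ ⟨h, hh, rfl⟩
  exact ⟨k * h * k⁻¹, (hstep i hi).2 k hk h hh, by simp⟩

theorem IsSupersolvable.of_subsingleton [Subsingleton G] : IsSupersolvable G :=
  ⟨0, fun _ => ⊥, rfl, Subsingleton.elim _ _, fun _ => normal_bot, fun _ h => absurd h (by omega)⟩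

theorem IsSupersolvable.of_surjective {Q : Type*} [Group Q] (f : G →* Q)
    (hf : Function.Surjective f) (hG : IsSupersolvable G) : IsSupersolvable Q := by
  obtain ⟨n, c, hc0, hcn, hnormal, hstep⟩ := hG
  refine ⟨n, fun i => (c i).map f, by simp only [hc0, Subgroup.map_bot],
    by simp only [hcn, map_top_of_surjective f hf], fun i => (hnormal i).map f hf, fun i hi => ?_⟩
  obtain ⟨hle, g, hg⟩ := hstep i hi
  exact ⟨map_mono hle, f g, by simp only [hg, Subgroup.map_sup, MonoidHom.map_zpowers]⟩

theorem IsSupersolvable.of_quotient_zpowers (x : G) [(zpowers x).Normal]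
    (hQ : IsSupersolvable (G ⧸ zpowers x)) : IsSupersolvable G := by
  obtain ⟨n, d, hd0, hdn, hnormal, hstep⟩ := hQ
  set π := QuotientGroup.mk' (zpowers x)
  have hπ : Function.Surjective π := QuotientGroup.mk'_surjective _
  refine ⟨n + 1, fun | 0 => ⊥ | i + 1 => (d i).comap π, rfl, by simp [hdn], ?_, ?_⟩
  · rintro (_ | i)
    exacts [normal_bot, (hnormal i).comap π]
  · rintro (_ | i) hi
    · exact ⟨bot_le, x, by simp [hd0, π]⟩
    · obtain ⟨hle, q, hq⟩ := hstep i (by omega)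
      obtain ⟨g, rfl⟩ := hπ q
      refine ⟨comap_mono hle, g, ?_⟩
      have hmap : d i ⊔ zpowers (π g) = (comap π (d i) ⊔ zpowers g).map π := by
        rw [Subgroup.map_sup, map_comap_eq_self_of_surjective hπ, MonoidHom.map_zpowers]
      have hker : π.ker ≤ comap π (d i) ⊔ zpowers g := (ker_le_comap π _).trans le_sup_left
      simp only [hq, hmap, comap_map_eq, sup_eq_left.mpr hker]

theorem Subgroup.isCyclic_of_disjoint_of_le_sup_zpowers {L K : Subgroup G} [K.Normal] {g : G}
    (hLK : Disjoint L K) (hle : L ≤ K ⊔ zpowers g) : IsCyclic L := by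
  set π := QuotientGroup.mk' K
  have hrange (l : L) : π l ∈ zpowers (π g) := by
    have := mem_map_of_mem π (hle l.2)
    rwa [Subgroup.map_sup, (Subgroup.map_eq_bot_iff K).mpr (QuotientGroup.ker_mk' K).ge,
      bot_sup_eq, MonoidHom.map_zpowers] at this
  refine isCyclic_of_injective ((π.comp L.subtype).codRestrict _ hrange) ?_
  refine (injective_iff_map_eq_one _).mpr fun l hl => ?_
  have hlK : (l : G) ∈ K := (QuotientGroup.eq_one_iff _).mp (congrArg Subtype.val hl)
  exact Subtype.ext (hLK.le_bot ⟨l.2, hlK⟩)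

theorem IsSupersolvable.exists_zpowers_normal_le (hG : IsSupersolvable G) {W : Subgroup G}
    [W.Normal] (hW : W ≠ ⊥) : ∃ v : G, v ≠ 1 ∧ v ∈ W ∧ (zpowers v).Normal := by
  classical
  obtain ⟨n, c, hc0, hcn, hnormal, hstep⟩ := hG
  have hex : ∃ i, W ⊓ c i ≠ ⊥ := ⟨n, by rwa [hcn, inf_top_eq]⟩
  obtain ⟨j, hj⟩ : ∃ j, Nat.find hex = j + 1 :=
    Nat.exists_eq_succ_of_ne_zero fun h => Nat.find_spec hex (by rw [h, hc0, inf_bot_eq])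
  have hjn : j < n := by
    have := Nat.find_min' hex (show W ⊓ c n ≠ ⊥ by rwa [hcn, inf_top_eq])
    omega
  have hWj : W ⊓ c j = ⊥ := by
    by_contra h
    have := Nat.find_min' hex h
    omega
  obtain ⟨-, g, hg⟩ := hstep j hjn
  set L := W ⊓ c (j + 1)
  have hL : L ≠ ⊥ := by
    have := Nat.find_spec hex
    rwa [hj] at this
  have : IsCyclic L := by
    have := hnormal j
    refine isCyclic_of_disjoint_of_le_sup_zpowers (K := c j) (g := g) ?_ (hg ▸ inf_le_right)
    rw [disjoint_iff, eq_bot_iff, ← hWj]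
    exact inf_le_inf_right _ inf_le_left
  obtain ⟨v, hv⟩ := L.isCyclic_iff_exists_zpowers_eq_top.mp this
  refine ⟨v, fun h => hL (by rw [← hv, h, zpowers_one_eq_bot]), ?_, hv ▸ inferInstance⟩
  exact (hv ▸ mem_zpowers v : v ∈ L).1

theorem isNilpotent_commutator_of_surjective {Q : Type*} [Group Q] (f : G →* Q)
    (hf : Function.Surjective f) (hG : Group.IsNilpotent (commutator G)) :
    Group.IsNilpotent (commutator Q) := by
  have : commutator Q = (commutator G).map f := by
    rw [commutator_def, commutator_def, map_commutator, map_top_of_surjective f hf]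
  rw [this]
  exact Group.nilpotent_of_surjective _ (f.subgroupMap_surjective _)

theorem exists_isMinimalNormal [Finite G] [Nontrivial G] : ∃ N : Subgroup G, IsMinimalNormal N := by
  obtain ⟨N, ⟨hNn, hN⟩, hmin⟩ := (Set.toFinite {N : Subgroup G | N.Normal ∧ N ≠ ⊥}).exists_minimal
    ⟨⊤, inferInstance, top_ne_bot⟩
  exact ⟨N, hNn, hN, fun K hK hKN =>
    or_iff_not_imp_left.mpr fun hK' => le_antisymm hKN (hmin ⟨hK, hK'⟩ hKN)⟩

variable {N : Subgroup G}

theorem conj_conj_eq_conj_of_commutator_eq_bot (hN : ⁅N, commutator G⁆ = ⊥) {n : G} (hn : n ∈ N)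
    (g k : G) : g * k * g⁻¹ * n * (g * k * g⁻¹)⁻¹ = k * n * k⁻¹ := by
  have hc : Commute n ⁅k⁻¹, g⁆ :=
    commute_of_commutator_eq_bot hN hn (commutator_mem_commutator (mem_top _) (mem_top _))
  calc g * k * g⁻¹ * n * (g * k * g⁻¹)⁻¹ = k * (⁅k⁻¹, g⁆ * n * ⁅k⁻¹, g⁆⁻¹) * k⁻¹ := by
        simp only [commutatorElement_def]; group
    _ = k * n * k⁻¹ := by rw [hc.symm.eq, mul_inv_cancel_right]

theorem normal_commutator_of_commutator_eq_bot [N.Normal] (hN : ⁅N, commutator G⁆ = ⊥)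
    (H : Subgroup G) : (⁅N, H⁆).Normal := by
  refine ⟨fun x hx g => ?_⟩
  suffices ⁅N, H⁆.map (MulAut.conj g).toMonoidHom ≤ ⁅N, H⁆ from this ⟨x, hx, rfl⟩
  rw [map_commutator, Subgroup.commutator_le]
  rintro _ ⟨n, hn, rfl⟩ _ ⟨h, hh, rfl⟩
  set m := g * n * g⁻¹
  have hm : m ∈ N := ‹N.Normal›.conj_mem n hn g
  convert commutator_mem_commutator hm hh using 1
  simp only [MulEquiv.coe_toMonoidHom, MulAut.conj_apply]
  calc ⁅m, g * h * g⁻¹⁆ = m * (g * h * g⁻¹ * m⁻¹ * (g * h * g⁻¹)⁻¹) := by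
        simp only [commutatorElement_def]; group
    _ = m * (h * m⁻¹ * h⁻¹) := by rw [conj_conj_eq_conj_of_commutator_eq_bot hN (inv_mem hm)]
    _ = ⁅m, h⁆ := by simp only [commutatorElement_def]; group

theorem IsMinimalNormal.commutator_commutator_eq_bot (hN : IsMinimalNormal N)
    (hder : Group.IsNilpotent (commutator G)) : ⁅N, commutator G⁆ = ⊥ := by
  have := hN.1
  refine (hN.2.2 _ inferInstance (commutator_le_left _ _)).resolve_right fun h => hN.2.1 ?_
  exact eq_bot_of_le_commutator (h ▸ commutator_le_right _ _) h.ge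

theorem IsMinimalNormal.commutator_self_eq_bot (hN : IsMinimalNormal N)
    (hN' : ⁅N, commutator G⁆ = ⊥) : ⁅N, N⁆ = ⊥ := by
  have := hN.1
  rcases hN.2.2 (N ⊓ commutator G) inferInstance inf_le_left with h | h
  · exact le_bot_iff.mp (h ▸ le_inf (commutator_le_left N N) (commutator_mono le_top le_top))
  · exact le_bot_iff.mp (hN' ▸ commutator_mono le_rfl (h ▸ inf_le_right))

theorem IsMinimalNormal.commutator_eq_bot_of_disjoint (hN : IsMinimalNormal N)
    (hN' : ⁅N, commutator G⁆ = ⊥) {A : Subgroup G} (hA : SubnormalIn A ⊤) (hNA : Disjoint N A) :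
    ⁅N, A⁆ = ⊥ := by
  have := hN.1
  have := normal_commutator_of_commutator_eq_bot hN' A
  refine (hN.2.2 _ inferInstance (commutator_le_left N A)).resolve_right fun h => hN.2.1 ?_
  obtain ⟨m, hm⟩ := hA.exists_iterate_commutator_le
  have hmono : Monotone (fun H : Subgroup G => ⁅H, A⁆) := fun _ _ h => commutator_mono h le_rfl
  have hfix : (fun H => ⁅H, A⁆)^[m] N = N := Function.iterate_fixed (f := fun H => ⁅H, A⁆) h m
  exact hNA.eq_bot_of_le ((hfix.ge.trans (hmono.iterate m le_top)).trans hm)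

theorem IsMinimalNormal.conj_eq_zpow_of_conj_eq_zpow (hN : IsMinimalNormal N)
    (hN' : ⁅N, commutator G⁆ = ⊥) {a v : G} {l : ℤ} (hvN : v ∈ N) (hv : v ≠ 1)
    (hav : a * v * a⁻¹ = v ^ l) {n : G} (hn : n ∈ N) : a * n * a⁻¹ = n ^ l := by
  have hNN := hN.commutator_self_eq_bot hN'
  let S : Subgroup G :=
    { carrier := {x | x ∈ N ∧ a * x * a⁻¹ = x ^ l}
      one_mem' := ⟨one_mem N, by simp⟩
      mul_mem' := by
        rintro x y ⟨hxN, hx⟩ ⟨hyN, hy⟩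
        refine ⟨mul_mem hxN hyN, ?_⟩
        rw [(commute_of_commutator_eq_bot hNN hxN hyN).mul_zpow, ← hx, ← hy]
        group
      inv_mem' := by
        rintro x ⟨hxN, hx⟩
        refine ⟨inv_mem hxN, ?_⟩
        rw [inv_zpow', zpow_neg, ← hx]
        group }
  have hS : S.Normal := by
    refine ⟨fun x ⟨hxN, hx⟩ g => ⟨hN.1.conj_mem x hxN g, ?_⟩⟩
    rw [conj_zpow, ← hx, ← conj_conj_eq_conj_of_commutator_eq_bot hN' hxN g⁻¹ a]
    group
  rcases hN.2.2 S hS fun x hx => hx.1 with h | h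
  · exact absurd (mem_bot.mp (h ▸ (⟨hvN, hav⟩ : v ∈ S))) hv
  · exact (h ▸ hn : n ∈ S).2

theorem IsMinimalNormal.exists_conj_mem_zpowers (hN : IsMinimalNormal N)
    (hN' : ⁅N, commutator G⁆ = ⊥) {A : Subgroup G} (hA : SubnormalIn A ⊤)
    (hAs : IsSupersolvable A) : ∃ v ∈ N, v ≠ 1 ∧ ∀ a ∈ A, a * v * a⁻¹ ∈ zpowers v := by
  have := hN.1
  by_cases hNA : Disjoint N A
  · obtain ⟨v, hvN, hv⟩ := N.bot_or_exists_ne_one.resolve_left hN.2.1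
    have hNA' := hN.commutator_eq_bot_of_disjoint hN' hA hNA
    refine ⟨v, hvN, hv, fun a ha => ?_⟩
    rw [(commute_of_commutator_eq_bot hNA' hvN ha).symm.eq, mul_inv_cancel_right]
    exact mem_zpowers v
  · obtain ⟨v, hv, hvN, hnormal⟩ := IsSupersolvable.exists_zpowers_normal_le hAs
      (W := N.subgroupOf A) fun h => hNA (subgroupOf_eq_bot.mp h)
    refine ⟨v, hvN, fun h => hv (Subtype.ext h), fun a ha => ?_⟩
    have := mem_map_of_mem A.subtype (hnormal.conj_mem v (mem_zpowers v) ⟨a, ha⟩)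
    rwa [MonoidHom.map_zpowers] at this

theorem IsMinimalNormal.exists_conj_eq_zpow (hN : IsMinimalNormal N)
    (hN' : ⁅N, commutator G⁆ = ⊥) {A : Subgroup G} (hA : SubnormalIn A ⊤)
    (hAs : IsSupersolvable A) {a : G} (ha : a ∈ A) : ∃ l : ℤ, ∀ n ∈ N, a * n * a⁻¹ = n ^ l := by
  obtain ⟨v, hvN, hv, hinv⟩ := hN.exists_conj_mem_zpowers hN' hA hAs
  obtain ⟨l, hl⟩ := mem_zpowers_iff.mp (hinv a ha)
  exact ⟨l, fun n hn => hN.conj_eq_zpow_of_conj_eq_zpow hN' hvN hv hl.symm hn⟩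

theorem exists_conj_eq_zpow_mul {a b : G} (ha : ∃ l : ℤ, ∀ n ∈ N, a * n * a⁻¹ = n ^ l)
    (hb : ∃ l : ℤ, ∀ n ∈ N, b * n * b⁻¹ = n ^ l) :
    ∃ l : ℤ, ∀ n ∈ N, a * b * n * (a * b)⁻¹ = n ^ l := by
  obtain ⟨la, ha⟩ := ha
  obtain ⟨lb, hb⟩ := hb
  refine ⟨lb * la, fun n hn => ?_⟩
  rw [zpow_mul, ← ha _ (zpow_mem hn lb), ← hb n hn]
  group

theorem IsMinimalNormal.exists_eq_zpowers (hN : IsMinimalNormal N)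
    (h : ∀ g : G, ∃ l : ℤ, ∀ n ∈ N, g * n * g⁻¹ = n ^ l) : ∃ x, N = zpowers x := by
  obtain ⟨x, hxN, hx⟩ := N.bot_or_exists_ne_one.resolve_left hN.2.1
  have hnormal : (zpowers x).Normal := by
    refine ⟨fun y hy g => ?_⟩
    obtain ⟨l, hl⟩ := h g
    rw [hl y (zpowers_le.mpr hxN hy)]
    exact zpow_mem hy l
  rcases hN.2.2 _ hnormal (zpowers_le.mpr hxN) with h | h
  · exact absurd (zpowers_eq_bot.mp h) hx
  · exact ⟨x, h.symm⟩

end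

theorem isSupersolvable_of_product_subnormal_supersolvable {G : Type*} [Group G] [Finite G]
    (A B : Subgroup G) (hA : SubnormalIn A ⊤) (hB : SubnormalIn B ⊤)
    (hAs : IsSupersolvable A) (hBs : IsSupersolvable B)
    (hprod : (A : Set G) * (B : Set G) = Set.univ)
    (hder : Group.IsNilpotent ↥(⁅(⊤ : Subgroup G), (⊤ : Subgroup G)⁆)) :
    IsSupersolvable G := by
  induction h : Nat.card G using Nat.strong_induction_on generalizing G with
  | _ n ih =>
  rcases subsingleton_or_nontrivial G with _ | _
  · exact IsSupersolvable.of_subsingleton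
  obtain ⟨N, hN⟩ := exists_isMinimalNormal (G := G)
  have hN' := hN.commutator_commutator_eq_bot hder
  obtain ⟨x, rfl⟩ := hN.exists_eq_zpowers fun g => by
    obtain ⟨a, ha, b, hb, rfl⟩ : g ∈ (A : Set G) * B := hprod ▸ Set.mem_univ g
    exact exists_conj_eq_zpow_mul (hN.exists_conj_eq_zpow hN' hA hAs ha)
      (hN.exists_conj_eq_zpow hN' hB hBs hb)
  have := hN.1
  set π := QuotientGroup.mk' (zpowers x)
  have hπ : Function.Surjective π := QuotientGroup.mk'_surjective _
  refine IsSupersolvable.of_quotient_zpowers x (ih _ ?_ (A.map π) (B.map π) (hA.map π hπ)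
    (hB.map π hπ) (IsSupersolvable.of_surjective _ (π.subgroupMap_surjective A) hAs)
    (IsSupersolvable.of_surjective _ (π.subgroupMap_surjective B) hBs) ?_
    (isNilpotent_commutator_of_surjective π hπ hder) rfl)
  · rw [← h, card_eq_card_quotient_mul_card_subgroup (zpowers x)]
    exact lt_mul_of_one_lt_right Nat.card_pos ((one_lt_card_iff_ne_bot _).mpr hN.2.1)
  · rw [coe_map, coe_map, ← Set.image_mul, hprod, Set.image_univ_of_surjective hπ]
end

section
/- Let G be a finite group with trivial Frattini subgroup. If every abnormal maximal subgroup of G contains the socle Soc(G) (the subgroup generated by all minimal normal subgroups of G), then G is nilpotent. -/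
open Subgroup Pointwise

/-!
Since `Φ(G) = 1`, every minimal normal subgroup `N` lies outside some maximal subgroup `M`, and
by hypothesis `M` is normal. Then `G/M` is cyclic and `N ∩ M = 1`, so `[N, N] ≤ [G, G] ∩ N ≤ M ∩ N`
and `[N, M] ≤ N ∩ M` are trivial: `N` is central, hence `Soc(G) ≤ Z(G)`.

A minimal supplement `H` of a central subgroup `A` is normal, as `G = AH`, and meets `A` trivially:
otherwise a maximal subgroup `M` avoiding `A ∩ H` gives `H = (A ∩ H)(M ∩ H)` by Dedekind's law, so
`M ∩ H` is a smaller supplement. For `A = Soc(G)`, the normal subgroup `H` contains no minimal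
normal subgroup, so `H = 1` and `G = Soc(G)` is abelian.
-/

namespace Subgroup

variable {G : Type*} [Group G]

theorem normal_of_le_center {H : Subgroup G} (hH : H ≤ center G) : H.Normal :=
  ⟨fun x hx g => by rwa [mem_center_iff.mp (hH hx) g, mul_inv_cancel_right]⟩

theorem normal_of_sup_eq_top_of_le_center {A H : Subgroup G} (hA : A ≤ center G)
    (hAH : A ⊔ H = ⊤) : H.Normal :=
  normalizer_eq_top_iff.mp <| top_le_iff.mp <|
    hAH ▸ sup_le (hA.trans (center_le_normalizer _)) le_normalizer

theorem sup_inf_eq_of_le_of_normal {D M H : Subgroup G} [D.Normal] (hDH : D ≤ H) :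
    (D ⊔ M) ⊓ H = D ⊔ (M ⊓ H) :=
  SetLike.coe_injective <| by
    rw [coe_inf, normal_mul, normal_mul, mul_inf_assoc _ _ _ hDH]

theorem exists_isCoatom_not_le_of_frattini_eq_bot (hΦ : frattini G = ⊥) {X : Subgroup G}
    (hX : X ≠ ⊥) : ∃ M : Subgroup G, IsCoatom M ∧ ¬X ≤ M := by
  by_contra! hle
  exact hX <| le_bot_iff.mp <| hΦ ▸ le_iInf₂ hle

theorem commutator_le_of_isCoatom {M : Subgroup G} [M.Normal] (hM : IsCoatom M) :
    _root_.commutator G ≤ M := by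
  rw [← Normal.quotient_commutative_iff_commutator_le]
  refine ⟨⟨fun a b => ?_⟩⟩
  induction a using QuotientGroup.induction_on with | H x => ?_
  by_cases hx : x ∈ M
  · rw [(QuotientGroup.eq_one_iff x).mpr hx, one_mul, mul_one]
  have hzp : (zpowers (x : G ⧸ M)).comap (QuotientGroup.mk' M) = ⊤ := by
    refine hM.lt_iff.mp (SetLike.lt_iff_le_and_exists.mpr ⟨fun m hm => ?_, x, ?_, hx⟩)
    · simp [(QuotientGroup.eq_one_iff m).mpr hm]
    · exact mem_zpowers (x : G ⧸ M)
  induction b using QuotientGroup.induction_on with | H y => ?_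
  obtain ⟨k, hk⟩ : (y : G ⧸ M) ∈ zpowers (x : G ⧸ M) := hzp.ge (mem_top y)
  rw [← hk]
  exact (Commute.self_zpow (x : G ⧸ M) k).eq

end Subgroup

section

variable {G : Type*} [Group G]

theorem IsMinimalNormal.le_socle {N : Subgroup G} (hN : IsMinimalNormal N) : N ≤ socle G :=
  le_iSup₂ (f := fun K (_ : IsMinimalNormal K) => K) N hN

theorem exists_isMinimalNormal_le [Finite G] {H : Subgroup G} [H.Normal] (hH : H ≠ ⊥) :
    ∃ N, IsMinimalNormal N ∧ N ≤ H := by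
  obtain ⟨N, ⟨hNH, hNn, hN⟩, hmin⟩ :=
    Set.Finite.exists_minimalFor id {K : Subgroup G | K ≤ H ∧ K.Normal ∧ K ≠ ⊥}
      (Set.toFinite _) ⟨H, le_rfl, inferInstance, hH⟩
  refine ⟨N, ⟨hNn, hN, fun K hKn hKN => or_iff_not_imp_left.mpr fun hK => ?_⟩, hNH⟩
  exact le_antisymm hKN (hmin ⟨hKN.trans hNH, hKn, hK⟩ hKN)

theorem eq_bot_of_normal_of_socle_inf_eq_bot [Finite G] {H : Subgroup G} [H.Normal]
    (hH : socle G ⊓ H = ⊥) : H = ⊥ := by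
  by_contra hne
  obtain ⟨N, hN, hNH⟩ := exists_isMinimalNormal_le hne
  exact hN.2.1 <| le_bot_iff.mp <| hH ▸ le_inf hN.le_socle hNH

theorem abnormal_of_isCoatom_of_not_normal [Finite G] {M : Subgroup G} (hM : IsCoatom M)
    (hMn : ¬M.Normal) : Abnormal M := by
  intro g
  by_cases hg : M.map (MulAut.conj g).toMonoidHom ≤ M
  · have hnorm : normalizer (M : Set G) = M :=
      (M.le_normalizer.eq_or_lt.resolve_right fun hlt =>
        hMn (normalizer_eq_top_iff.mp (hM.lt_iff.mp hlt))).symm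
    have hgM : g ∈ normalizer (M : Set G) := mem_normalizer_iff_map_conj_eq.mpr <|
      eq_of_le_of_card_ge hg (card_map_of_injective (MulAut.conj g).injective).ge
    exact mem_sup_left (hnorm ▸ hgM)
  · rw [hM.lt_iff.mp (left_lt_sup.mpr hg)]
    exact mem_top g

theorem IsMinimalNormal.le_center_of_isCoatom {N M : Subgroup G} (hN : IsMinimalNormal N)
    (hM : IsCoatom M) [M.Normal] (hNM : ¬N ≤ M) : N ≤ center G := by
  have := hN.1
  have hinf : N ⊓ M = ⊥ := (hN.2.2 _ inferInstance inf_le_left).resolve_right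
    fun h => hNM (h ▸ inf_le_right)
  have hsup : M ⊔ N = ⊤ := hM.lt_iff.mp (left_lt_sup.mpr hNM)
  have hNN : ⁅N, N⁆ = ⊥ := le_bot_iff.mp <| hinf ▸ le_inf (commutator_le_left N N)
    ((commutator_mono le_top le_top).trans (commutator_le_of_isCoatom hM))
  have hNMcomm : ⁅N, M⁆ = ⊥ := le_bot_iff.mp <| hinf ▸ commutator_le_inf N M
  rw [← centralizer_univ, ← coe_top, ← hsup, le_centralizer_iff, sup_le_iff,
    ← le_centralizer_iff, ← commutator_eq_bot_iff_le_centralizer,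
    ← commutator_eq_bot_iff_le_centralizer]
  exact ⟨hNMcomm, hNN⟩

theorem socle_le_center [Finite G] (hΦ : frattini G = ⊥)
    (h : ∀ M : Subgroup G, IsCoatom M → Abnormal M → socle G ≤ M) : socle G ≤ center G := by
  refine iSup₂_le fun N hN => ?_
  obtain ⟨M, hM, hNM⟩ := exists_isCoatom_not_le_of_frattini_eq_bot hΦ hN.2.1
  by_cases hMn : M.Normal
  · exact hN.le_center_of_isCoatom hM hNM
  · exact absurd (hN.le_socle.trans (h M hM (abnormal_of_isCoatom_of_not_normal hM hMn))) hNM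

theorem inf_eq_bot_of_minimal_supplement (hΦ : frattini G = ⊥) {A H : Subgroup G}
    (hA : A ≤ center G) (hAH : A ⊔ H = ⊤) (hmin : ∀ K ≤ H, A ⊔ K = ⊤ → H ≤ K) :
    A ⊓ H = ⊥ := by
  by_contra hD
  obtain ⟨M, hM, hDM⟩ := exists_isCoatom_not_le_of_frattini_eq_bot hΦ hD
  have : (A ⊓ H).Normal := normal_of_le_center (inf_le_left.trans hA)
  have hH : A ⊓ H ⊔ M ⊓ H = H := by
    rw [← sup_inf_eq_of_le_of_normal inf_le_right, hM.lt_iff.mp (right_lt_sup.mpr hDM), top_inf_eq]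
  have hAMH : A ⊔ M ⊓ H = ⊤ := by
    rw [← hH, ← sup_assoc, sup_inf_self] at hAH
    exact hAH
  exact hDM (inf_le_right.trans ((hmin _ inf_le_right hAMH).trans inf_le_left))

theorem exists_normal_complement_of_le_center [Finite G] (hΦ : frattini G = ⊥)
    {A : Subgroup G} (hA : A ≤ center G) : ∃ H : Subgroup G, H.Normal ∧ A ⊔ H = ⊤ ∧ A ⊓ H = ⊥ := by
  obtain ⟨H, hAH, hmin⟩ := Set.Finite.exists_minimalFor id {K : Subgroup G | A ⊔ K = ⊤}
    (Set.toFinite _) ⟨⊤, sup_top_eq A⟩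
  exact ⟨H, normal_of_sup_eq_top_of_le_center hA hAH, hAH,
    inf_eq_bot_of_minimal_supplement hΦ hA hAH fun K hKH hAK => hmin hAK hKH⟩

end

theorem isNilpotent_of_abnormal_maximals_contain_socle {G : Type*} [Group G] [Finite G]
    (hΦ : frattini G = ⊥)
    (h : ∀ M : Subgroup G, IsCoatom M → Abnormal M → socle G ≤ M) :
    Group.IsNilpotent G := by
  have hsoc := socle_le_center hΦ h
  obtain ⟨H, hHn, hsup, hinf⟩ := exists_normal_complement_of_le_center hΦ hsoc
  rw [eq_bot_of_normal_of_socle_inf_eq_bot hinf, sup_bot_eq] at hsup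
  exact ⟨1, by rw [Subgroup.upperCentralSeries_one, eq_top_iff, ← hsup]; exact hsoc⟩
end
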